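/- Let α ≥ 3 and κ ≥ ω be cardinals, and let {X_i : i ∈ I} be a set of topological spaces such that S(X_i) ≥ α for each i ∈ I. Let μ := min{κ, |I|⁺}. Then S((X_I)_κ) > β^{<μ} for each cardinal β < α. -/

import Mathlib

open Cardinal TopologicalSpace Set

universe u

/-- The `κ`-box topology on a product of topological spaces: generated by the boxes
`Π i, U i` with each `U i` open and fewer than `κ` coordinates restricted. -/
def boxTopology (κ : Cardinal.{u}) {ι : Type u} (X : ι → Type u)
    [∀ i, TopologicalSpace (X i)] : TopologicalSpace (∀ i, X i) :=
  TopologicalSpace.generateFrom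
    {S | ∃ U : ∀ i, Set (X i), (∀ i, IsOpen (U i)) ∧
      #{i | U i ≠ Set.univ} < κ ∧ S = Set.pi Set.univ U}

/-- A cellular family: a family of pairwise disjoint nonempty open sets. -/
def IsCellular {X : Type u} [TopologicalSpace X] (C : Set (Set X)) : Prop :=
  (∀ U ∈ C, IsOpen U ∧ U.Nonempty) ∧ C.Pairwise fun U V => Disjoint U V

/-- The Souslin number: the least cardinal `c` such that no cellular family has
cardinality `c` (finite values allowed). -/
noncomputable def souslin (X : Type u) [TopologicalSpace X] : Cardinal.{u} :=
  sInf {c | ¬∃ C : Set (Set X), IsCellular C ∧ #C = c}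

/-!
Since `β < α ≤ S(X i)`, every factor carries `β` pairwise disjoint nonempty open cells (after
replacing `β` by `max β 2`, which only increases `β ^< μ` and stays below `α ≥ 3`). A partial
choice of cells on fewer than `κ` coordinates is an open `κ`-box, and two such boxes are disjoint
as soon as the partial choices disagree at some coordinate. It thus suffices to find `β ^< μ`
pairwise incompatible partial functions `ι → β` with domains of size `< κ`: if `|ι| < κ`, all
total functions (`β ^ |ι| = β ^< |ι|⁺`); otherwise the nodes of the `β`-ary tree of height `κ`,
placed on a copy of `κ ⊕ κ` inside `ι`.
-/

open Function Topology

section Souslin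

variable {X : Type u} [TopologicalSpace X]

def IsCellularFamily {Ω : Type*} (f : Ω → Set X) : Prop :=
  (∀ ω, IsOpen (f ω)) ∧ (∀ ω, (f ω).Nonempty) ∧ Pairwise (Disjoint on f)

lemma IsCellular.mono {C D : Set (Set X)} (hC : IsCellular C) (hD : D ⊆ C) : IsCellular D :=
  ⟨fun U hU => hC.1 U (hD hU), hC.2.mono hD⟩

lemma IsCellular.lt_souslin {C : Set (Set X)} (hC : IsCellular C) : #C < souslin X := by
  set S := {c | ¬∃ C : Set (Set X), IsCellular C ∧ #C = c}
  have hS : S.Nonempty :=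
    ⟨Order.succ #(Set X), fun ⟨D, _, hD⟩ => (hD ▸ mk_set_le D).not_gt (Order.lt_succ _)⟩
  by_contra! hle
  obtain ⟨D, hDC, hD⟩ := le_mk_iff_exists_subset.mp hle
  exact csInf_mem hS ⟨D, hC.mono hDC, hD⟩

lemma exists_isCellular_of_lt_souslin {c : Cardinal.{u}} (hc : c < souslin X) :
    ∃ C : Set (Set X), IsCellular C ∧ #C = c := by
  by_contra h
  exact (csInf_le' h).not_gt hc

lemma IsCellularFamily.injective {Ω : Type*} {f : Ω → Set X} (hf : IsCellularFamily f) :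
    Injective f := fun ω ω' h => by
  by_contra hne
  have hdisj : Disjoint (f ω) (f ω') := hf.2.2 hne
  rw [h] at hdisj
  exact (hf.2.1 ω').ne_empty (disjoint_self.mp hdisj)

lemma IsCellularFamily.lt_souslin {Ω : Type u} {f : Ω → Set X} (hf : IsCellularFamily f) :
    #Ω < souslin X := by
  have hC : IsCellular (range f) := by
    refine ⟨?_, ?_⟩
    · rintro _ ⟨ω, rfl⟩
      exact ⟨hf.1 ω, hf.2.1 ω⟩
    · rintro _ ⟨ω, rfl⟩ _ ⟨ω', rfl⟩ hne
      exact hf.2.2 fun h => hne (congrArg f h)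
  simpa only [mk_range_eq f hf.injective] using hC.lt_souslin

lemma exists_isCellularFamily_of_lt_souslin {Ω : Type u} (hΩ : #Ω < souslin X) :
    ∃ f : Ω → Set X, IsCellularFamily f := by
  obtain ⟨C, hC, hCΩ⟩ := exists_isCellular_of_lt_souslin hΩ
  obtain ⟨e⟩ := Cardinal.eq.mp hCΩ.symm
  refine ⟨fun ω => e ω, fun ω => (hC.1 _ (e ω).2).1, fun ω => (hC.1 _ (e ω).2).2, ?_⟩
  intro ω ω' hne
  exact hC.2 (e ω).2 (e ω').2 fun h => hne (e.injective (Subtype.ext h))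

end Souslin

section PartialBox

variable {ι : Type u} {X : ι → Type u} {B : Type*}

def partialBox (u : ∀ i, B → Set (X i)) (a : ι → Option B) : Set (∀ i, X i) :=
  univ.pi fun i => (a i).elim univ (u i)

def Incompatible (a a' : ι → Option B) : Prop :=
  ∃ i, ∃ b ∈ a i, ∃ b' ∈ a' i, b ≠ b'

variable {u : ∀ i, B → Set (X i)}

lemma isOpen_partialBox [∀ i, TopologicalSpace (X i)] (κ : Cardinal.{u})
    (hu : ∀ i b, IsOpen (u i b)) {a : ι → Option B} (ha : #{i | a i ≠ none} < κ) :
    IsOpen[boxTopology κ X] (partialBox u a) := by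
  refine GenerateOpen.basic _ ⟨_, fun i => ?_, (mk_le_mk_of_subset fun i hi => ?_).trans_lt ha,
    rfl⟩
  · cases a i <;> simp [hu]
  · contrapose! hi
    simp_all

lemma partialBox_nonempty [Nonempty B] (hu : ∀ i b, (u i b).Nonempty) (a : ι → Option B) :
    (partialBox u a).Nonempty := by
  obtain ⟨b⟩ := ‹Nonempty B›
  refine univ_pi_nonempty_iff.mpr fun i => ?_
  cases a i
  exacts [(hu i b).mono (subset_univ _), hu i _]

lemma disjoint_partialBox (hu : ∀ i, Pairwise (Disjoint on u i)) {a a' : ι → Option B}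
    (h : Incompatible a a') : Disjoint (partialBox u a) (partialBox u a') := by
  obtain ⟨i, b, hb, b', hb', hbb'⟩ := h
  refine disjoint_left.mpr fun x hx hx' => ?_
  have hxb : x i ∈ u i b := by simpa [Option.mem_def.mp hb] using hx i (mem_univ i)
  have hxb' : x i ∈ u i b' := by simpa [Option.mem_def.mp hb'] using hx' i (mem_univ i)
  exact disjoint_left.mp (hu i hbb') hxb hxb'

lemma isCellularFamily_partialBox [∀ i, TopologicalSpace (X i)] [Nonempty B] (κ : Cardinal.{u})
    (hu : ∀ i, IsCellularFamily (u i)) {Ω : Type*} {A : Ω → ι → Option B}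
    (hsmall : ∀ ω, #{i | A ω i ≠ none} < κ) (hA : Pairwise (Incompatible on A)) :
    @IsCellularFamily _ (boxTopology κ X) _ fun ω => partialBox u (A ω) :=
  ⟨fun ω => isOpen_partialBox κ (fun i => (hu i).1) (hsmall ω),
    fun ω => partialBox_nonempty (fun i => (hu i).2.1) (A ω),
    fun _ _ hne => disjoint_partialBox (fun i => (hu i).2.2) (hA hne)⟩

end PartialBox

section IncompatibleFamilies

variable {B : Type u}

lemma pairwise_incompatible_some {ι : Type*} :
    Pairwise (Incompatible on fun (f : ι → B) i => some (f i)) := fun f g hfg => by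
  obtain ⟨i, hi⟩ := ne_iff.mp hfg
  exact ⟨i, f i, rfl, g i, rfl, hi⟩

lemma Incompatible.extend {T ι : Type*} {j : T → ι} (hj : Injective j) {a a' : T → Option B}
    (h : Incompatible a a') :
    Incompatible (extend j a fun _ => none) (extend j a' fun _ => none) := by
  obtain ⟨p, hp⟩ := h
  exact ⟨j p, by simpa only [hj.extend_apply] using hp⟩

lemma mk_extend_ne_none_le {T ι : Type u} {j : T → ι} (hj : Injective j) (a : T → Option B) :
    #{i | extend j a (fun _ => none) i ≠ none} ≤ #{p | a p ≠ none} := by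
  refine (mk_le_mk_of_subset (t := j '' {p | a p ≠ none}) fun i hi => ?_).trans mk_image_le
  by_cases h : ∃ p, j p = i
  · obtain ⟨p, rfl⟩ := h
    exact ⟨p, by simpa [hj.extend_apply] using hi, rfl⟩
  · exact absurd (extend_apply' _ _ _ h) hi

/-- The `inl` coordinates record the height `w` of a node (`b₁` exactly at `w`), so nodes of
different heights are incompatible, while nodes of equal height differ at some `inr` coordinate. -/
def treeNode (b₀ b₁ : B) {W : Type*} [LinearOrder W] (ω : Σ w : W, Iio w → B) :
    W ⊕ W → Option B
  | .inl v => if v < ω.1 then some b₀ else if v = ω.1 then some b₁ else none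
  | .inr v => if h : v < ω.1 then some (ω.2 ⟨v, h⟩) else none

variable {b₀ b₁ : B} {W : Type*} [LinearOrder W]

lemma pairwise_incompatible_treeNode (h : b₀ ≠ b₁) :
    Pairwise (Incompatible on treeNode b₀ b₁ (W := W)) := by
  rintro ⟨w, f⟩ ⟨w', f'⟩ hne
  rcases lt_trichotomy w w' with hw | rfl | hw
  · exact ⟨.inl w, b₁, by simp [treeNode], b₀, by simp [treeNode, hw], h.symm⟩
  · obtain ⟨⟨v, hvw⟩, hv⟩ := ne_iff.mp (show f ≠ f' from fun hf => hne (hf ▸ rfl))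
    have hvw : v < w := hvw
    exact ⟨.inr v, _, by simp [treeNode, hvw], _, by simp [treeNode, hvw], hv⟩
  · exact ⟨.inl w', b₀, by simp [treeNode, hw], b₁, by simp [treeNode], h⟩

lemma treeNode_ne_none_subset (ω : Σ w : W, Iio w → B) :
    {p | treeNode b₀ b₁ ω p ≠ none} ⊆ Sum.inl '' Iic ω.1 ∪ Sum.inr '' Iio ω.1 := by
  rintro (v | v) hv
  · refine .inl ⟨v, ?_, rfl⟩
    by_contra hvw
    simp_all [treeNode, (not_le.mp hvw).ne', not_lt_of_gt (not_le.mp hvw)]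
  · refine .inr ⟨v, ?_, rfl⟩
    by_contra hvw
    simp_all [treeNode]

end IncompatibleFamilies

lemma powerlt_le_powerlt_right {a b c : Cardinal.{u}} (h : a ≤ b) : a ^< c ≤ b ^< c :=
  powerlt_le.mpr fun _ hx => (power_le_power_right h).trans (le_powerlt b hx)

section TreeOfHeightκ

variable {κ : Cardinal.{u}} {B : Type u}

lemma exists_mk_Iio_eq {c : Cardinal.{u}} (hc : c < κ) : ∃ w : κ.ord.ToType, #(Iio w) = c := by
  have hcκ : c.ord < Ordinal.type ((· < ·) : κ.ord.ToType → κ.ord.ToType → Prop) := by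
    simpa using ord_lt_ord.mpr hc
  refine ⟨Ordinal.enum (· < ·) ⟨c.ord, hcκ⟩, ?_⟩
  change (Ordinal.typein (· < ·) _).card = c
  rw [Ordinal.typein_enum, card_ord]

lemma powerlt_le_mk_sigma_Iio : #B ^< κ ≤ #(Σ w : κ.ord.ToType, Iio w → B) := by
  refine powerlt_le.mpr fun c hc => ?_
  obtain ⟨w, rfl⟩ := exists_mk_Iio_eq hc
  rw [power_def]
  exact mk_le_of_injective (sigma_mk_injective (β := fun w : κ.ord.ToType => Iio w → B))

lemma mk_treeNode_ne_none_lt (hκ : ℵ₀ ≤ κ) (b₀ b₁ : B) (ω : Σ w : κ.ord.ToType, Iio w → B) :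
    #{p | treeNode b₀ b₁ ω p ≠ none} < κ := by
  have hIio : #(Iio ω.1) < κ := by simpa using mk_Iio_lt ω.1
  have hIic : #(Iic ω.1) < κ := by
    rw [← Iio_insert]
    exact mk_insert_le.trans_lt (add_lt_of_lt hκ hIio (one_lt_aleph0.trans_le hκ))
  calc #{p | treeNode b₀ b₁ ω p ≠ none}
      ≤ #(Sum.inl '' Iic ω.1 ∪ Sum.inr '' Iio ω.1 : Set (κ.ord.ToType ⊕ κ.ord.ToType)) :=
        mk_le_mk_of_subset (treeNode_ne_none_subset ω)
    _ ≤ #(Iic ω.1) + #(Iio ω.1) := (mk_union_le _ _).trans (add_le_add mk_image_le mk_image_le)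
    _ < κ := add_lt_of_lt hκ hIic hIio

end TreeOfHeightκ

section IncompatibleFamilyExistence

variable {κ : Cardinal.{u}} {ι : Type u}

lemma exists_incompatible_family_of_le_mk (hκ : ℵ₀ ≤ κ) (hκι : κ ≤ #ι) (B : Type u) [Nontrivial B] :
    ∃ (Ω : Type u) (A : Ω → ι → Option B), (∀ ω, #{i | A ω i ≠ none} < κ) ∧
      Pairwise (Incompatible on A) ∧ #B ^< κ ≤ #Ω := by
  obtain ⟨b₀, b₁, hb⟩ := exists_pair_ne B
  have hT : #(κ.ord.ToType ⊕ κ.ord.ToType) ≤ #ι := by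
    simpa [mk_sum, add_eq_self hκ] using hκι
  obtain ⟨j⟩ := hT
  refine ⟨_, fun ω => extend j (treeNode b₀ b₁ ω) fun _ => none,
    fun ω => (mk_extend_ne_none_le j.injective _).trans_lt (mk_treeNode_ne_none_lt hκ b₀ b₁ ω),
    fun ω ω' hne => (pairwise_incompatible_treeNode hb hne).extend j.injective,
    powerlt_le_mk_sigma_Iio⟩

lemma exists_incompatible_family_of_mk_lt (hικ : #ι < κ)
    (B : Type u) [Nonempty B] :
    ∃ (Ω : Type u) (A : Ω → ι → Option B), (∀ ω, #{i | A ω i ≠ none} < κ) ∧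
      Pairwise (Incompatible on A) ∧ #B ^< Order.succ #ι ≤ #Ω :=
  ⟨ι → B, fun f i => some (f i), fun _ => (mk_set_le _).trans_lt hικ, pairwise_incompatible_some,
    (powerlt_succ (mk_ne_zero B)).trans_le (power_def B ι).le⟩

lemma exists_incompatible_family (hκ : ℵ₀ ≤ κ) (ι : Type u) (B : Type u) [Nontrivial B] :
    ∃ (Ω : Type u) (A : Ω → ι → Option B), (∀ ω, #{i | A ω i ≠ none} < κ) ∧
      Pairwise (Incompatible on A) ∧ #B ^< min κ (Order.succ #ι) ≤ #Ω := by
  rcases le_total κ (Order.succ #ι) with h | h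
  · rw [min_eq_left h]
    by_cases hικ : #ι < κ
    · obtain ⟨Ω, A, hsmall, hA, hΩ⟩ := exists_incompatible_family_of_mk_lt hικ B
      exact ⟨Ω, A, hsmall, hA, (powerlt_le_powerlt_left h).trans hΩ⟩
    · exact exists_incompatible_family_of_le_mk hκ (not_lt.mp hικ) B
  · rw [min_eq_right h]
    exact exists_incompatible_family_of_mk_lt (Order.succ_le_iff.mp h) B

end IncompatibleFamilyExistence

theorem stmt13 (α κ : Cardinal.{u}) (hα : 3 ≤ α) (hκ : ℵ₀ ≤ κ)
    {ι : Type u} (X : ι → Type u) [∀ i, TopologicalSpace (X i)]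
    (hS : ∀ i, α ≤ souslin (X i)) :
    ∀ β < α, β ^< min κ (Order.succ #ι) < @souslin (∀ i, X i) (boxTopology κ X) := by
  intro β hβ
  set B := (max β 2).out
  have hB : #B < α := by
    rw [mk_out]
    exact max_lt hβ ((Nat.cast_lt.mpr (by norm_num)).trans_le hα)
  have : Nontrivial B := one_lt_iff_nontrivial.mp <| by
    rw [mk_out]
    exact Cardinal.one_lt_two.trans_le (le_max_right _ _)
  choose u hu using fun i => exists_isCellularFamily_of_lt_souslin (hB.trans_le (hS i))
  obtain ⟨Ω, A, hsmall, hA, hΩ⟩ := exists_incompatible_family hκ ι B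
  calc β ^< min κ (Order.succ #ι)
      ≤ #B ^< min κ (Order.succ #ι) := powerlt_le_powerlt_right (by simp [B])
    _ ≤ #Ω := hΩ
    _ < _ := @IsCellularFamily.lt_souslin _ (boxTopology κ X) _ _
      (isCellularFamily_partialBox κ hu hsmall hA)
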